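/- arXiv:2101.06698 — 5 statements merged into one kernel-verified Lean document; each statement's English description precedes it below -/
import Mathlib

section
/- Let r₁, r₂, τ₀ > 0 with r₁ + r₂ > 0 and r₂ > 0, and let Γ : [0,τ₀] × ℝ → [0,∞) be measurable with ∫₀^{τ₀}∫_ℝ Γ(τ,y) dy dτ = 1 and ∫₀^{τ₀}∫_ℝ Γ(τ,y) e^{py+qτ} dy dτ < ∞ for all p,q ∈ ℝ. Define Δ(λ,p) = −λ + p² + r₁ + r₂ ∫₀^{τ₀}∫_ℝ Γ(τ,y) e^{py − λτ} dy dτ. Then for each p ∈ ℝ there exists a unique λ(p) ∈ ℝ with Δ(λ(p), p) = 0. -/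
/-!
`Δ(λ, p) = 0` says that `λ` is a fixed point of `λ ↦ p² + r₁ + r₂ L(λ)`, where
`L(λ) = ∫∫ Γ(τ, y) e^{py} e^{-λτ} dy dτ` is a Laplace transform in the time variable. Since `Γ ≥ 0`
lives on `τ ∈ [0, τ₀]`, `L` is antitone, and it is continuous by dominated convergence. A continuous
antitone map of `ℝ` has exactly one fixed point: `x ↦ g x - x` is continuous and strictly
decreasing, and changes sign between `min 0 (g 0)` and `max 0 (g 0)`.
-/

open Real MeasureTheory

theorem Antitone.existsUnique_fixedPoint {g : ℝ → ℝ} (hg : Antitone g) (hc : Continuous g) :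
    ∃! x, g x = x := by
  have hanti : StrictAnti fun x => g x - x := fun x y hxy => by
    have := hg hxy.le
    dsimp only
    linarith
  set a := min 0 (g 0)
  set b := max 0 (g 0)
  have hab : a ≤ b := min_le_max
  have hga : 0 ≤ g a - a := by linarith [hg (min_le_left 0 (g 0)), min_le_right 0 (g 0)]
  have hgb : g b - b ≤ 0 := by linarith [hg (le_max_left 0 (g 0)), le_max_right 0 (g 0)]
  have hc' : Continuous fun x => g x - x := by fun_prop
  obtain ⟨x, -, hx⟩ := intermediate_value_Icc' hab hc'.continuousOn ⟨hgb, hga⟩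
  refine ⟨x, sub_eq_zero.mp hx, fun y hy => hanti.injective ?_⟩
  simp only [hy, sub_self, hx]

section Laplace

variable {α : Type*} [MeasurableSpace α] {μ : Measure α} {w T : α → ℝ}

theorem antitone_integral_mul_exp_neg_mul (hw : ∀ z, 0 ≤ w z) (hT : ∀ z, w z ≠ 0 → 0 ≤ T z)
    (hint : ∀ lam, Integrable (fun z => w z * exp (-lam * T z)) μ) :
    Antitone fun lam => ∫ z, w z * exp (-lam * T z) ∂μ := by
  intro a b hab
  refine integral_mono (hint b) (hint a) fun z => ?_
  rcases eq_or_ne (w z) 0 with h | h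
  · simp [h]
  · have := hT z h
    gcongr ?_ * exp ?_
    · exact hw z
    · nlinarith

theorem continuous_integral_mul_exp_neg_mul {M : ℝ} (hT : ∀ z, w z ≠ 0 → |T z| ≤ M)
    (hint : ∀ lam, Integrable (fun z => w z * exp (-lam * T z)) μ) :
    Continuous fun lam => ∫ z, w z * exp (-lam * T z) ∂μ := by
  refine continuous_iff_continuousAt.mpr fun lam₀ => ?_
  have hw : Integrable w μ := by simpa using hint 0
  refine continuousAt_of_dominated (bound := fun z => |w z| * exp ((|lam₀| + 1) * M))
    (.of_forall fun lam => (hint lam).aestronglyMeasurable) ?_ (hw.abs.mul_const _)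
    (.of_forall fun z => by fun_prop)
  filter_upwards [Metric.ball_mem_nhds lam₀ one_pos] with lam hlam
  refine .of_forall fun z => ?_
  rw [norm_mul, Real.norm_eq_abs, Real.norm_of_nonneg (exp_pos _).le]
  rcases eq_or_ne (w z) 0 with h | h
  · simp [h]
  · have hlam : |lam| ≤ |lam₀| + 1 := by
      have := abs_sub_abs_le_abs_sub lam lam₀
      rw [Metric.mem_ball, Real.dist_eq] at hlam
      linarith
    have hexp : -lam * T z ≤ (|lam₀| + 1) * M :=
      calc -lam * T z ≤ |lam| * |T z| := by rw [← abs_mul, neg_mul]; exact neg_le_abs _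
        _ ≤ (|lam₀| + 1) * M := mul_le_mul hlam (hT z h) (abs_nonneg _) (by positivity)
    gcongr

end Laplace

theorem exists_unique_lambda_general (r₁ r₂ τ₀ : ℝ) (hr₂ : 0 < r₂)
    (Γ : ℝ → ℝ → ℝ)
    (hΓnonneg : ∀ τ y, 0 ≤ Γ τ y)
    (hΓsupp : ∀ τ y, τ ∉ Set.Icc 0 τ₀ → Γ τ y = 0)
    (hΓint : ∀ p q : ℝ, Integrable
      (fun z : ℝ × ℝ => Γ z.1 z.2 * Real.exp (p * z.2 + q * z.1)))
    (Δ : ℝ → ℝ → ℝ)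
    (hΔ : ∀ lam p, Δ lam p =
      -lam + p ^ 2 + r₁ + r₂ * ∫ z : ℝ × ℝ, Γ z.1 z.2 * Real.exp (p * z.2 - lam * z.1)) :
    ∀ p : ℝ, ∃! lam : ℝ, Δ lam p = 0 := by
  intro p
  set w : ℝ × ℝ → ℝ := fun z => Γ z.1 z.2 * exp (p * z.2)
  have hsplit : ∀ lam (z : ℝ × ℝ),
      Γ z.1 z.2 * exp (p * z.2 - lam * z.1) = w z * exp (-lam * z.1) := fun lam z => by
    rw [sub_eq_add_neg, exp_add, neg_mul, mul_assoc]
  have hint : ∀ lam, Integrable fun z => w z * exp (-lam * z.1) := fun lam => by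
    simpa only [hsplit, neg_mul, ← sub_eq_add_neg] using hΓint p (-lam)
  have hsupp : ∀ z, w z ≠ 0 → z.1 ∈ Set.Icc 0 τ₀ := fun z hz => by
    by_contra h
    exact hz (by simp only [w, hΓsupp _ _ h, zero_mul])
  have hanti := antitone_integral_mul_exp_neg_mul
    (fun z => mul_nonneg (hΓnonneg _ _) (exp_pos _).le) (fun z hz => (hsupp z hz).1) hint
  have hcont := continuous_integral_mul_exp_neg_mul
    (fun z hz => abs_le.mpr ⟨by linarith [(hsupp z hz).1, (hsupp z hz).2], (hsupp z hz).2⟩) hint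
  have hfixed : ∀ lam, Δ lam p = 0 ↔
      p ^ 2 + r₁ + r₂ * ∫ z, w z * exp (-lam * z.1) = lam := fun lam => by
    simp only [hΔ, hsplit]
    constructor <;> intro h <;> linarith
  exact (existsUnique_congr hfixed).mpr <| Antitone.existsUnique_fixedPoint
    ((hanti.const_mul hr₂.le).const_add (p ^ 2 + r₁)) (by fun_prop)

/-- For each `p` there is a unique `λ` with `Δ(λ,p) = 0`, where
`Δ(λ,p) = −λ + p² + r₁ + r₂ ∫∫ Γ(τ,y) e^{py − λτ} dy dτ`. -/
theorem exists_unique_lambda (r₁ r₂ τ₀ : ℝ) (hτ₀ : 0 < τ₀) (hr₂ : 0 < r₂)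
    (hr : 0 < r₁ + r₂)
    (Γ : ℝ → ℝ → ℝ)
    (hΓmeas : Measurable (Function.uncurry Γ))
    (hΓnonneg : ∀ τ y, 0 ≤ Γ τ y)
    (hΓsupp : ∀ τ y, τ ∉ Set.Icc 0 τ₀ → Γ τ y = 0)
    (hΓint : ∀ p q : ℝ, Integrable
      (fun z : ℝ × ℝ => Γ z.1 z.2 * Real.exp (p * z.2 + q * z.1)))
    (hΓprob : (∫ z : ℝ × ℝ, Γ z.1 z.2) = 1)
    (Δ : ℝ → ℝ → ℝ)
    (hΔ : ∀ lam p, Δ lam p =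
      -lam + p ^ 2 + r₁ + r₂ * ∫ z : ℝ × ℝ, Γ z.1 z.2 * Real.exp (p * z.2 - lam * z.1)) :
    ∀ p : ℝ, ∃! lam : ℝ, Δ lam p = 0 :=
  exists_unique_lambda_general r₁ r₂ τ₀ hr₂ Γ hΓnonneg hΓsupp hΓint Δ hΔ
end

section
/- Under the hypotheses defining λ(p) implicitly by Δ(λ(p),p) = 0 where Δ(λ,p) = −λ + p² + r₁ + r₂∫₀^{τ₀}∫_ℝ Γ(τ,y)e^{py−λτ} dy dτ with Γ symmetric in y (Γ(τ,y) = Γ(τ,−y)): the function p ↦ λ(p) is even and strictly convex on ℝ. -/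
/-!
Write `Δ(λ, p) = -λ + p² + r₁ + r₂ M(λ, p)`, where `M` is the exponential moment of `Γ`.
Since `Γ ≥ 0` lives on `τ ≥ 0`, `M` is antitone in `λ`, so `Δ(·, p)` is strictly decreasing and
`λ(p)` is its unique root. The symmetry of `Γ` makes `M`, hence `Δ`, even in `p`, and uniqueness
of the root makes `λ` even. As an integral of exponentials of linear forms, `M` is jointly convex,
so `Δ(λ, p) - p²` is convex in `(λ, p)`. At a convex combination `(μ, x)` of two points on the
graph of `λ`, strict convexity of `p²` then gives `Δ(μ, x) < 0 = Δ(λ(x), x)`, and monotonicity in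
`λ` forces `λ(x) < μ`.
-/

open Real MeasureTheory

section ImplicitRoot

variable {Δ : ℝ → ℝ → ℝ} {lam : ℝ → ℝ}

theorem even_of_implicit_root (hanti : ∀ p, StrictAnti (Δ · p))
    (hsymm : ∀ l p, Δ l (-p) = Δ l p) (hlam : ∀ p, Δ (lam p) p = 0) : Function.Even lam :=
  fun p => (hanti p).injective (by rw [← hsymm, hlam (-p), hlam p])

theorem strictConvexOn_of_implicit_root (hanti : ∀ p, Antitone (Δ · p))
    (hconv : ConvexOn ℝ Set.univ fun z : ℝ × ℝ => Δ z.1 z.2 - z.2 ^ 2)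
    (hlam : ∀ p, Δ (lam p) p = 0) : StrictConvexOn ℝ Set.univ lam := by
  refine ⟨convex_univ, fun p _ q _ hpq a b ha hb hab => ?_⟩
  simp only [smul_eq_mul]
  have hsq : (a * p + b * q) ^ 2 < a * p ^ 2 + b * q ^ 2 := by
    simpa using (even_two.strictConvexOn_pow two_ne_zero).2
      (Set.mem_univ p) (Set.mem_univ q) hpq ha hb hab
  have hmix := hconv.2 (Set.mem_univ (lam p, p)) (Set.mem_univ (lam q, q)) ha.le hb.le hab
  simp only [Prod.smul_mk, Prod.mk_add_mk, smul_eq_mul, hlam] at hmix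
  have hneg : Δ (a * lam p + b * lam q) (a * p + b * q) < 0 := by linarith
  by_contra! hle
  exact (hanti (a * p + b * q) hle).not_gt (by simpa only [hlam] using hneg)

end ImplicitRoot

section ExpMoment

variable {Γ : ℝ → ℝ → ℝ}

noncomputable def expMoment (Γ : ℝ → ℝ → ℝ) (lam p : ℝ) : ℝ :=
  ∫ z : ℝ × ℝ, Γ z.1 z.2 * exp (p * z.2 - lam * z.1)

theorem expMoment_neg (hsymm : ∀ τ y, Γ τ (-y) = Γ τ y) (lam p : ℝ) :
    expMoment Γ lam (-p) = expMoment Γ lam p := by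
  have hreflect : MeasurePreserving (MeasurableEquiv.prodCongr (.refl ℝ) (.neg ℝ))
      (volume : Measure (ℝ × ℝ)) volume := by
    rw [Measure.volume_eq_prod]
    exact (MeasurePreserving.id volume).prod (Measure.measurePreserving_neg volume)
  rw [expMoment, ← hreflect.integral_comp', expMoment]
  congr 1 with z
  simp [MeasurableEquiv.prodCongr, hsymm]

theorem antitone_expMoment (hnonneg : ∀ τ y, 0 ≤ Γ τ y) (hsupp : ∀ τ y, τ < 0 → Γ τ y = 0)
    (hint : ∀ lam p, Integrable fun z : ℝ × ℝ => Γ z.1 z.2 * exp (p * z.2 - lam * z.1))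
    (p : ℝ) : Antitone (expMoment Γ · p) := by
  refine antitoneOn_univ.1 <| integral_antitoneOn_of_integrand_ae
    (ae_of_all _ fun z l₁ _ l₂ _ hl => ?_) fun l _ => hint l p
  rcases lt_or_ge z.1 0 with hτ | hτ
  · simp [hsupp _ _ hτ]
  · exact mul_le_mul_of_nonneg_left (exp_le_exp.2 (by nlinarith)) (hnonneg _ _)

theorem convexOn_expMoment (hnonneg : ∀ τ y, 0 ≤ Γ τ y)
    (hint : ∀ lam p, Integrable fun z : ℝ × ℝ => Γ z.1 z.2 * exp (p * z.2 - lam * z.1)) :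
    ConvexOn ℝ Set.univ fun z : ℝ × ℝ => expMoment Γ z.1 z.2 := by
  refine integral_convexOn_of_integrand_ae convex_univ (ae_of_all _ fun w => ?_)
    fun z _ => hint z.1 z.2
  let exponent : ℝ × ℝ →ₗ[ℝ] ℝ := w.2 • LinearMap.snd ℝ ℝ ℝ - w.1 • LinearMap.fst ℝ ℝ ℝ
  have hexp := (convexOn_exp.comp_linearMap exponent).smul (hnonneg w.1 w.2)
  rw [Set.preimage_univ] at hexp
  refine hexp.congr fun z _ => ?_
  simp only [exponent, Function.comp_apply, smul_eq_mul, LinearMap.sub_apply,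
    LinearMap.smul_apply, LinearMap.fst_apply, LinearMap.snd_apply]
  ring_nf

end ExpMoment

theorem lambda_even_strictConvex_general (r₁ r₂ τ₀ : ℝ) (hr₂ : 0 ≤ r₂)
    (Γ : ℝ → ℝ → ℝ)
    (hΓnonneg : ∀ τ y, 0 ≤ Γ τ y)
    (hΓsupp : ∀ τ y, τ ∉ Set.Icc 0 τ₀ → Γ τ y = 0)
    (hΓsymm : ∀ τ y, Γ τ (-y) = Γ τ y)
    (hΓint : ∀ p q : ℝ, Integrable
      (fun z : ℝ × ℝ => Γ z.1 z.2 * Real.exp (p * z.2 + q * z.1)))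
    (Δ : ℝ → ℝ → ℝ)
    (hΔ : ∀ lam p, Δ lam p =
      -lam + p ^ 2 + r₁ + r₂ * ∫ z : ℝ × ℝ, Γ z.1 z.2 * Real.exp (p * z.2 - lam * z.1))
    (lam : ℝ → ℝ) (hlam : ∀ p, Δ (lam p) p = 0) :
    (∀ p, lam (-p) = lam p) ∧ StrictConvexOn ℝ Set.univ lam := by
  have hΔ' : ∀ l p, Δ l p = -l + p ^ 2 + r₁ + r₂ * expMoment Γ l p := hΔ
  have hint : ∀ l p, Integrable fun z : ℝ × ℝ => Γ z.1 z.2 * exp (p * z.2 - l * z.1) :=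
    fun l p => by simpa [sub_eq_add_neg] using hΓint p (-l)
  have hsupp : ∀ τ y, τ < 0 → Γ τ y = 0 := fun τ y hτ => hΓsupp τ y fun h => hτ.not_ge h.1
  have hanti : ∀ p, StrictAnti (Δ · p) := fun p l₁ l₂ hl => by
    have := mul_le_mul_of_nonneg_left (antitone_expMoment hΓnonneg hsupp hint p hl.le) hr₂
    simp only [hΔ']
    linarith
  have hconv : ConvexOn ℝ Set.univ fun z : ℝ × ℝ => Δ z.1 z.2 - z.2 ^ 2 := by
    refine ((((-LinearMap.fst ℝ ℝ ℝ).convexOn convex_univ).add_const r₁).add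
      ((convexOn_expMoment hΓnonneg hint).smul hr₂)).congr fun z _ => ?_
    simp only [hΔ', Pi.add_apply, LinearMap.coe_neg, Pi.neg_apply, LinearMap.fst_apply,
      smul_eq_mul]
    ring
  exact ⟨even_of_implicit_root hanti (by simp [hΔ', expMoment_neg hΓsymm]) hlam,
    strictConvexOn_of_implicit_root (fun p => (hanti p).antitone) hconv hlam⟩

/-- If `λ(p)` is defined implicitly by `Δ(λ(p),p) = 0` with
`Δ(λ,p) = −λ + p² + r₁ + r₂ ∫∫ Γ(τ,y) e^{py − λτ} dy dτ` and `Γ` symmetric in `y`,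
then `p ↦ λ(p)` is even and strictly convex. -/
theorem lambda_even_strictConvex (r₁ r₂ τ₀ : ℝ) (hτ₀ : 0 < τ₀) (hr₂ : 0 ≤ r₂)
    (hr : 0 < r₁ + r₂)
    (Γ : ℝ → ℝ → ℝ)
    (hΓmeas : Measurable (Function.uncurry Γ))
    (hΓnonneg : ∀ τ y, 0 ≤ Γ τ y)
    (hΓsupp : ∀ τ y, τ ∉ Set.Icc 0 τ₀ → Γ τ y = 0)
    (hΓsymm : ∀ τ y, Γ τ (-y) = Γ τ y)
    (hΓint : ∀ p q : ℝ, Integrable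
      (fun z : ℝ × ℝ => Γ z.1 z.2 * Real.exp (p * z.2 + q * z.1)))
    (hΓprob : (∫ z : ℝ × ℝ, Γ z.1 z.2) = 1)
    (Δ : ℝ → ℝ → ℝ)
    (hΔ : ∀ lam p, Δ lam p =
      -lam + p ^ 2 + r₁ + r₂ * ∫ z : ℝ × ℝ, Γ z.1 z.2 * Real.exp (p * z.2 - lam * z.1))
    (lam : ℝ → ℝ) (hlam : ∀ p, Δ (lam p) p = 0) :
    (∀ p, lam (-p) = lam p) ∧ StrictConvexOn ℝ Set.univ lam :=
  lambda_even_strictConvex_general r₁ r₂ τ₀ hr₂ Γ hΓnonneg hΓsupp hΓsymm hΓint Δ hΔ lam hlam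
end

section
/- Let H : ℝ³ → ℝ be continuous in (q,p) for each s, strictly increasing in q with ∂_q H ≥ 1, and define H̃(s,p) by H(s,−H̃(s,p),p) = 0. Let H_*(s,q,p) = liminf_{(s',q',p')→(s,q,p)} H(s',q',p') and H̃_*(s,p) = liminf_{(s',p')→(s,p)} H̃(s',p'). Then H_*(s₀,q₀,p₀) ≤ 0 if and only if q₀ + H̃_*(s₀,p₀) ≤ 0. -/
/-!
Because `H` is strictly increasing in `q` and vanishes at `q = -H̃(s,p)`, the sublevel sets
`{H ≤ 0}` and `{q + H̃ ≤ 0}` coincide. The condition `q₀ + H̃_*(s₀,p₀) ≤ 0` says that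
`((s₀,p₀), -q₀)` lies in the closure of the epigraph of `H̃`, i.e. that `(s₀,q₀,p₀)` lies in the
closure of `{q + H̃ ≤ 0}`. The condition `H_*(s₀,q₀,p₀) ≤ 0` says the same about `{H ≤ 0}`: since
`H` grows at least at unit rate in `q`, a nearby point where `H < δ`, moved by `δ` in the
`-q` direction, lands in `{H ≤ 0}` and stays nearby.
-/

open Filter Topology

theorem EReal.coe_add_le_zero_iff (c : ℝ) (x : EReal) :
    (c : EReal) + x ≤ 0 ↔ x ≤ ((-c : ℝ) : EReal) := by
  rw [EReal.coe_neg, ← zero_sub, EReal.le_sub_iff_add_le (by simp) (by simp), add_comm]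

theorem mem_closure_epigraph_iff {X : Type*} [TopologicalSpace X] (g : X → ℝ) (x₀ : X) (r₀ : ℝ) :
    (x₀, r₀) ∈ closure {p : X × ℝ | g p.1 ≤ p.2} ↔
      liminf (fun x => (g x : EReal)) (𝓝 x₀) ≤ r₀ := by
  rw [mem_closure_iff_frequently, nhds_prod_eq]
  constructor
  · intro h
    refine EReal.le_of_forall_lt_iff_le.mp fun r hr => liminf_le_of_frequently_le' ?_
    have hr : ∀ᶠ p : X × ℝ in 𝓝 x₀ ×ˢ 𝓝 r₀, p.2 < r :=
      tendsto_snd.eventually (eventually_lt_nhds (mod_cast hr))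
    refine tendsto_fst.frequently ((h.and_eventually hr).mono fun p hp => ?_)
    exact mod_cast hp.1.trans hp.2.le
  · intro h
    rw [frequently_iff]
    intro U hU
    obtain ⟨V, hV, W, hW, hVW⟩ := mem_prod_iff.mp hU
    obtain ⟨u, hr₀u, hu⟩ := exists_Ico_subset_of_mem_nhds hW ⟨r₀ + 1, by linarith⟩
    have hlt : ∃ᶠ x in 𝓝 x₀, (g x : EReal) < u :=
      frequently_lt_of_liminf_lt (by isBoundedDefault) (h.trans_lt (mod_cast hr₀u))
    obtain ⟨x, hgx, hx⟩ := (hlt.and_eventually hV).exists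
    refine ⟨(x, max (g x) r₀), hVW ⟨hx, hu ⟨le_max_right _ _, ?_⟩⟩,
      show g x ≤ max (g x) r₀ from le_max_left _ _⟩
    exact max_lt (EReal.coe_lt_coe_iff.mp hgx) hr₀u

theorem liminf_nhds_le_zero_iff_mem_closure {E : Type*} [TopologicalSpace E] [AddCommGroup E]
    [Module ℝ E] [IsTopologicalAddGroup E] [ContinuousSMul ℝ E] {f : E → ℝ} {v : E}
    (hf : ∀ x (t : ℝ), 0 ≤ t → f x + t ≤ f (x + t • v)) (x₀ : E) :
    liminf (fun x => (f x : EReal)) (𝓝 x₀) ≤ 0 ↔ x₀ ∈ closure {x | f x ≤ 0} := by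
  rw [mem_closure_iff_frequently]
  refine ⟨fun h => ?_, fun h => liminf_le_of_frequently_le' (h.mono fun x hx => mod_cast hx)⟩
  rw [frequently_iff]
  intro U hU
  have hshift : Tendsto (fun p : E × ℝ => p.1 - p.2 • v) (𝓝 x₀ ×ˢ 𝓝 0) (𝓝 x₀) := by
    rw [← nhds_prod_eq]
    exact (by fun_prop : Continuous fun p : E × ℝ => p.1 - p.2 • v).tendsto' _ _ (by simp)
  obtain ⟨P, hP, Q, hQ, hPQ⟩ := eventually_prod_iff.mp (hshift.eventually hU)
  obtain ⟨t, hQt, ht⟩ :=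
    ((hQ.filter_mono nhdsWithin_le_nhds).and (self_mem_nhdsWithin (s := Set.Ioi (0 : ℝ)))).exists
  have hlt : ∃ᶠ x in 𝓝 x₀, (f x : EReal) < t :=
    frequently_lt_of_liminf_lt (by isBoundedDefault) (h.trans_lt (mod_cast ht))
  obtain ⟨x, hfx, hx⟩ := (hlt.and_eventually hP).exists
  refine ⟨x - t • v, hPQ hx hQt, show f (x - t • v) ≤ 0 from ?_⟩
  have hshift_le := hf (x - t • v) t ht.le
  rw [sub_add_cancel] at hshift_le
  linarith [EReal.coe_lt_coe_iff.mp hfx]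

def negMiddleToLast : ℝ × ℝ × ℝ ≃ₜ (ℝ × ℝ) × ℝ where
  toFun z := ((z.1, z.2.2), -z.2.1)
  invFun w := (w.1.1, -w.2, w.1.2)
  left_inv z := by simp
  right_inv w := by simp
  continuous_toFun := by fun_prop
  continuous_invFun := by fun_prop

theorem lower_envelope_compat_general
    (H : ℝ → ℝ → ℝ → ℝ)
    (hHmono : ∀ s p q₁ q₂, q₁ ≤ q₂ → H s q₁ p + (q₂ - q₁) ≤ H s q₂ p)
    (Ht : ℝ → ℝ → ℝ) (hHt : ∀ s p, H s (-(Ht s p)) p = 0)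
    (Hstar : ℝ → ℝ → ℝ → EReal)
    (hHstar : ∀ s q p, Hstar s q p =
      Filter.liminf (fun z : ℝ × ℝ × ℝ => ((H z.1 z.2.1 z.2.2 : ℝ) : EReal))
        (𝓝 (s, q, p)))
    (Htstar : ℝ → ℝ → EReal)
    (hHtstar : ∀ s p, Htstar s p =
      Filter.liminf (fun z : ℝ × ℝ => ((Ht z.1 z.2 : ℝ) : EReal)) (𝓝 (s, p))) :
    ∀ s₀ q₀ p₀ : ℝ,
      Hstar s₀ q₀ p₀ ≤ 0 ↔ (q₀ : EReal) + Htstar s₀ p₀ ≤ 0 := by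
  intro s₀ q₀ p₀
  have hshift (z : ℝ × ℝ × ℝ) (t : ℝ) (ht : 0 ≤ t) :
      H z.1 z.2.1 z.2.2 + t ≤ H (z + t • (0, 1, 0)).1 (z + t • (0, 1, 0)).2.1
        (z + t • (0, 1, 0)).2.2 := by
    simpa using hHmono z.1 z.2.2 z.2.1 (z.2.1 + t) (by linarith)
  have hsign : {z : ℝ × ℝ × ℝ | H z.1 z.2.1 z.2.2 ≤ 0} =
      negMiddleToLast ⁻¹' {w | Ht w.1.1 w.1.2 ≤ w.2} := by
    ext ⟨s, q, p⟩
    have hstrict : StrictMono fun q => H s q p := fun q₁ q₂ hq => by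
      linarith [hHmono s p q₁ q₂ hq.le]
    simpa [negMiddleToLast, hHt, le_neg] using hstrict.le_iff_le (a := q) (b := -Ht s p)
  rw [hHstar, hHtstar, liminf_nhds_le_zero_iff_mem_closure hshift, hsign,
    ← negMiddleToLast.preimage_closure]
  exact (mem_closure_epigraph_iff (fun w : ℝ × ℝ => Ht w.1 w.2) (s₀, p₀) (-q₀)).trans
    (EReal.coe_add_le_zero_iff q₀ _).symm

/-- Lower-envelope compatibility: if `H` is continuous in `(q,p)` for each `s`,
increasing in `q` with increments at least `q₂ − q₁`, and `H̃` is defined by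
`H(s, −H̃(s,p), p) = 0`, then `H_*(s₀,q₀,p₀) ≤ 0 ↔ q₀ + H̃_*(s₀,p₀) ≤ 0`,
where `H_*` and `H̃_*` are the lower semicontinuous envelopes (joint liminf). -/
theorem lower_envelope_compat
    (H : ℝ → ℝ → ℝ → ℝ)
    (hHcont : ∀ s, Continuous (fun qp : ℝ × ℝ => H s qp.1 qp.2))
    (hHmono : ∀ s p q₁ q₂, q₁ ≤ q₂ → H s q₁ p + (q₂ - q₁) ≤ H s q₂ p)
    (Ht : ℝ → ℝ → ℝ) (hHt : ∀ s p, H s (-(Ht s p)) p = 0)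
    (Hstar : ℝ → ℝ → ℝ → EReal)
    (hHstar : ∀ s q p, Hstar s q p =
      Filter.liminf (fun z : ℝ × ℝ × ℝ => ((H z.1 z.2.1 z.2.2 : ℝ) : EReal))
        (𝓝 (s, q, p)))
    (Htstar : ℝ → ℝ → EReal)
    (hHtstar : ∀ s p, Htstar s p =
      Filter.liminf (fun z : ℝ × ℝ => ((Ht z.1 z.2 : ℝ) : EReal)) (𝓝 (s, p))) :
    ∀ s₀ q₀ p₀ : ℝ,
      Hstar s₀ q₀ p₀ ≤ 0 ↔ (q₀ : EReal) + Htstar s₀ p₀ ≤ 0 :=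
  lower_envelope_compat_general H hHmono Ht hHt Hstar hHstar Htstar hHtstar
end

section
/- Let ρ : [0,∞) → [0,∞) be continuous and nondecreasing with ρ(0) = 0, and suppose s ↦ ρ(s)/s has no positive local maximum point in (0,∞) (i.e. there is no s₀ > 0 with ρ(s₀)/s₀ > 0 that is a local maximum of s ↦ ρ(s)/s). If additionally limsup_{s→0+} ρ(s)/s < ∞, then lim_{s→∞} ρ(s)/s exists in [0,∞], and if this limit is finite then sup_{s>0} ρ(s)/s ≤ max{limsup_{s→0+} ρ(s)/s, lim_{s→∞} ρ(s)/s} < ∞. -/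
/-!
A continuous function whose maximum on `[a, b]` exceeds `max (f a) (f b)` attains it at an
interior local maximum, so the hypothesis on local maxima makes `σ(s) = ρ(s)/s` quasiconvex on
`(0, ∞)`. A quasiconvex function on a half-line is eventually monotone, hence has a limit in
`[-∞, ∞]`. If `σ s` exceeds a finite limit `L`, then `σ t < σ s` for some large `t ≥ s`, and
quasiconvexity on `[ε, t]` gives `σ s ≤ σ ε` for all `ε ∈ (0, s)`, so `σ s` is below the limsup
at `0⁺`.
-/

open Set Filter Topology

section Quasiconvex

variable {β : Type*} [LinearOrder β]

theorem quasiconvexOn_real_iff_le_max {s : Set ℝ} {f : ℝ → β} :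
    QuasiconvexOn ℝ s f ↔
      s.OrdConnected ∧ ∀ a ∈ s, ∀ b ∈ s, ∀ x ∈ Icc a b, f x ≤ max (f a) (f b) := by
  refine ⟨fun hf => ⟨convex_iff_ordConnected.mp hf.convex, fun a ha b hb x hx => ?_⟩,
    fun ⟨hs, h⟩ r => convex_iff_ordConnected.mpr ⟨fun a ha b hb x hx => ?_⟩⟩
  · exact ((convex_iff_ordConnected.mp (hf (max (f a) (f b)))).out
      ⟨ha, le_max_left _ _⟩ ⟨hb, le_max_right _ _⟩ hx).2
  · exact ⟨hs.out ha.1 hb.1 hx, (h a ha.1 b hb.1 x hx).trans (max_le ha.2 hb.2)⟩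

theorem ContinuousOn.quasiconvexOn_of_not_isLocalMax [TopologicalSpace β] [ClosedIciTopology β]
    {s : Set ℝ} {f : ℝ → β} (hs : s.OrdConnected) (hf : ContinuousOn f s)
    (hmax : ∀ a ∈ s, ∀ c ∈ s, f a < f c → ¬ IsLocalMax f c) : QuasiconvexOn ℝ s f := by
  refine quasiconvexOn_real_iff_le_max.mpr ⟨hs, fun a ha b hb x hx => ?_⟩
  by_contra! hlt
  obtain ⟨c, hc, hcmax⟩ := isCompact_Icc.exists_isMaxOn ⟨x, hx⟩ (hf.mono (hs.out ha hb))
  have hxc : max (f a) (f b) < f c := hlt.trans_le (hcmax hx)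
  have hac : a < c := hc.1.lt_of_ne fun h => by simp [← h] at hxc
  have hcb : c < b := hc.2.lt_of_ne fun h => by simp [h] at hxc
  exact hmax a ha c (hs.out ha hb hc) ((le_max_left _ _).trans_lt hxc)
    (hcmax.isLocalMax (Icc_mem_nhds hac hcb))

/-- Once a quasiconvex function has increased, it can never decrease again. -/
theorem QuasiconvexOn.antitoneOn_or_exists_monotoneOn {a : ℝ} {f : ℝ → β}
    (hf : QuasiconvexOn ℝ (Ioi a) f) : AntitoneOn f (Ioi a) ∨ ∃ b, MonotoneOn f (Ici b) := by
  have hle := (quasiconvexOn_real_iff_le_max.mp hf).2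
  by_cases hinc : ∃ x ∈ Ioi a, ∃ y, x < y ∧ f x < f y
  · obtain ⟨x, hx, y, hxy, hfxy⟩ := hinc
    have hIci : Ici y ⊆ Ioi a := Ici_subset_Ioi.mpr (lt_trans hx hxy)
    have hyu : ∀ u ∈ Ici y, f y ≤ f u := fun u hu =>
      (le_max_iff.mp (hle x hx u (hIci hu) y ⟨hxy.le, hu⟩)).resolve_left hfxy.not_ge
    refine Or.inr ⟨y, fun u hu v hv huv => ?_⟩
    exact (le_max_iff.mp (hle x hx v (hIci hv) u ⟨hxy.le.trans hu, huv⟩)).resolve_left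
      (hfxy.trans_le (hyu u hu)).not_ge
  · push Not at hinc
    exact Or.inl fun x hx y _ hxy =>
      hxy.eq_or_lt.elim (fun h => h ▸ le_rfl) (hinc x hx y)

end Quasiconvex

section MonotoneLimit

variable {α β : Type*} [LinearOrder α] [CompleteLinearOrder β] [TopologicalSpace β]
  [OrderTopology β] {f : α → β} {b : α}

theorem MonotoneOn.exists_tendsto_atTop (hf : MonotoneOn f (Ici b)) :
    ∃ l, Tendsto f atTop (𝓝 l) := by
  have hmono : Monotone fun x => f (max x b) := fun x y hxy =>
    hf (le_max_right x b) (le_max_right y b) (max_le_max_right b hxy)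
  refine ⟨_, (tendsto_atTop_iSup hmono).congr' ?_⟩
  filter_upwards [eventually_ge_atTop b] with x hx
  rw [max_eq_left hx]

theorem AntitoneOn.exists_tendsto_atTop (hf : AntitoneOn f (Ici b)) :
    ∃ l, Tendsto f atTop (𝓝 l) :=
  MonotoneOn.exists_tendsto_atTop (β := βᵒᵈ) hf

end MonotoneLimit

theorem QuasiconvexOn.exists_tendsto_atTop {β : Type*} [CompleteLinearOrder β]
    [TopologicalSpace β] [OrderTopology β] {a : ℝ} {f : ℝ → β}
    (hf : QuasiconvexOn ℝ (Ioi a) f) : ∃ l, Tendsto f atTop (𝓝 l) := by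
  rcases hf.antitoneOn_or_exists_monotoneOn with hanti | ⟨b, hmono⟩
  · exact (hanti.mono (Ici_subset_Ioi.mpr (lt_add_one a))).exists_tendsto_atTop
  · exact hmono.exists_tendsto_atTop

theorem QuasiconvexOn.le_max_limsup_nhdsGT {β : Type*} [ConditionallyCompleteLinearOrder β]
    [TopologicalSpace β] [OrderTopology β] {a s : ℝ} {f : ℝ → β} {L : β}
    (hf : QuasiconvexOn ℝ (Ioi a) f) (hL : Tendsto f atTop (𝓝 L))
    (hbdd : IsBoundedUnder (· ≤ ·) (𝓝[>] a) f) (hs : a < s) :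
    f s ≤ max (limsup f (𝓝[>] a)) L := by
  rcases le_or_gt (f s) L with hsL | hLs
  · exact hsL.trans (le_max_right _ _)
  have hle := (quasiconvexOn_real_iff_le_max.mp hf).2
  obtain ⟨t, hst, hts⟩ := ((eventually_ge_atTop s).and (hL.eventually_lt_const hLs)).exists
  have hε : ∀ᶠ ε in 𝓝[>] a, f s ≤ f ε := by
    filter_upwards [Ioo_mem_nhdsGT hs] with ε hε
    exact (le_max_iff.mp (hle ε hε.1 t (hs.trans_le hst) s ⟨hε.2.le, hst⟩)).resolve_right
      hts.not_ge
  exact (le_limsup_of_frequently_le hε.frequently hbdd).trans (le_max_left _ _)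

theorem sigma_limit_exists_general
    (ρ : ℝ → ℝ)
    (hρnonneg : ∀ s, 0 ≤ s → 0 ≤ ρ s)
    (hρcont : ContinuousOn ρ (Set.Ici 0))
    (hnomax : ∀ s₀ : ℝ, 0 < s₀ → 0 < ρ s₀ / s₀ →
      ¬ IsLocalMax (fun s => ρ s / s) s₀)
    (hbdd : ∃ A : ℝ, ∀ᶠ s in 𝓝[>] (0:ℝ), ρ s / s ≤ A) :
    ∃ l : EReal,
      Tendsto (fun s : ℝ => ((ρ s / s : ℝ) : EReal)) atTop (𝓝 l) ∧ 0 ≤ l ∧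
      ∀ lr : ℝ, l = (lr : EReal) →
        ∀ s : ℝ, 0 < s →
          ρ s / s ≤ max (Filter.limsup (fun s => ρ s / s) (𝓝[>] (0:ℝ))) lr := by
  set σ : ℝ → ℝ := fun s => ρ s / s
  have hσnonneg : ∀ s ∈ Ioi (0 : ℝ), 0 ≤ σ s := fun s hs => div_nonneg (hρnonneg s hs.le) hs.le
  have hσcont : ContinuousOn σ (Ioi 0) :=
    (hρcont.mono Ioi_subset_Ici_self).div continuousOn_id fun _ hs => hs.ne'
  have hσquasi : QuasiconvexOn ℝ (Ioi 0) σ :=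
    hσcont.quasiconvexOn_of_not_isLocalMax ordConnected_Ioi fun a ha c hc hac =>
      hnomax c hc ((hσnonneg a ha).trans_lt hac)
  obtain ⟨l, hl⟩ := (hσquasi.monotone_comp (fun _ _ => EReal.coe_le_coe)).exists_tendsto_atTop
  refine ⟨l, hl, ge_of_tendsto hl ?_, ?_⟩
  · filter_upwards [eventually_gt_atTop 0] with s hs
    exact EReal.coe_nonneg.mpr (hσnonneg s hs)
  · rintro lr rfl s hs
    obtain ⟨A, hA⟩ := hbdd
    exact hσquasi.le_max_limsup_nhdsGT (EReal.tendsto_coe.mp hl)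
      (isBoundedUnder_of_eventually_le hA) hs

/-- If `ρ ≥ 0` is continuous and nondecreasing on `[0,∞)` with `ρ(0) = 0`, and
`s ↦ ρ(s)/s` has no positive local maximum in `(0,∞)` and is bounded above near `0+`,
then `lim_{s→∞} ρ(s)/s` exists in `[0,∞]`, and when finite,
`sup_{s>0} ρ(s)/s ≤ max{limsup_{s→0+} ρ(s)/s, lim_{s→∞} ρ(s)/s}`. -/
theorem sigma_limit_exists
    (ρ : ℝ → ℝ)
    (hρnonneg : ∀ s, 0 ≤ s → 0 ≤ ρ s)
    (hρcont : ContinuousOn ρ (Set.Ici 0))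
    (hρmono : MonotoneOn ρ (Set.Ici 0))
    (hρ0 : ρ 0 = 0)
    (hnomax : ∀ s₀ : ℝ, 0 < s₀ → 0 < ρ s₀ / s₀ →
      ¬ IsLocalMax (fun s => ρ s / s) s₀)
    (hbdd : ∃ A : ℝ, ∀ᶠ s in 𝓝[>] (0:ℝ), ρ s / s ≤ A) :
    ∃ l : EReal,
      Tendsto (fun s : ℝ => ((ρ s / s : ℝ) : EReal)) atTop (𝓝 l) ∧ 0 ≤ l ∧
      ∀ lr : ℝ, l = (lr : EReal) →
        ∀ s : ℝ, 0 < s →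
          ρ s / s ≤ max (Filter.limsup (fun s => ρ s / s) (𝓝[>] (0:ℝ))) lr :=
  sigma_limit_exists_general ρ hρnonneg hρcont hnomax hbdd
end

section
/- Let R₁, R₂ : ℝ → ℝ be upper semicontinuous at s₀, locally monotone at s₀ (in the sense of Definition 1.2), with R₁ + R₂ also locally monotone at s₀, and suppose R₂ is piecewise constant near s₀ with a jump R₂(s₀+) > R₂(s₀−). Then R₂(s₀) = R₂(s₀+) and limsup_{s'→s₀} R₁(s') = R₁(s₀); moreover lim_{δ→0} sup{R₁(s₁) − R₁(s₂) : |s_i − s₀| < δ, s₁ < s₂} ≤ 0 (i.e. R₁ is 'locally nondecreasing' at s₀). -/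
/-!
Upper semicontinuity of `R₂` and its value `b` just right of `s₀` give `R₂ s₀ ≥ b`.
Write `S = R₁ + R₂`. Wherever `S s₀ ≤ S s + ε` for `s` near `s₀` on a side where `R₂ = c`,
the bound `R₁ s < R₁ s₀ + ε` from upper semicontinuity of `R₁` forces `R₂ s₀ ≤ c + 2ε`.
On the left (`c = a < b`) this rules out that `S` is locally nonincreasing, so `S` is locally
nondecreasing, and on the right (`c = b`) it gives `R₂ s₀ ≤ b`. As `R₂` is constant on each
side of the jump, `R₁ = S - R₂` inherits the local monotonicity of `S` on each side; across
the jump one passes through a point `t < s₀` where `R₁ t < R₁ s₀ + ε`. Finally, a locally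
nondecreasing upper semicontinuous function is continuous from the right, which pins down
its limsup.
-/

open Real Filter Topology

/-- `h` is locally monotone at `s₀` (Definition 1.2 of the paper): either
`lim_{δ→0} inf_{|sᵢ−s₀|<δ, s₁<s₂} (h(s₁)−h(s₂)) ≥ 0` or
`lim_{δ→0} sup_{|sᵢ−s₀|<δ, s₁<s₂} (h(s₁)−h(s₂)) ≤ 0`. -/
def LocallyMonotoneAt (h : ℝ → ℝ) (s₀ : ℝ) : Prop :=
  (∀ ε : ℝ, 0 < ε → ∃ δ : ℝ, 0 < δ ∧ ∀ s₁ s₂ : ℝ,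
      |s₁ - s₀| < δ → |s₂ - s₀| < δ → s₁ < s₂ → -ε ≤ h s₁ - h s₂) ∨
  (∀ ε : ℝ, 0 < ε → ∃ δ : ℝ, 0 < δ ∧ ∀ s₁ s₂ : ℝ,
      |s₁ - s₀| < δ → |s₂ - s₀| < δ → s₁ < s₂ → h s₁ - h s₂ ≤ ε)

open Set

def LocallyNonincreasingAt (h : ℝ → ℝ) (s₀ : ℝ) : Prop :=
  ∀ ε : ℝ, 0 < ε → ∃ δ : ℝ, 0 < δ ∧ ∀ s₁ s₂ : ℝ,
    |s₁ - s₀| < δ → |s₂ - s₀| < δ → s₁ < s₂ → -ε ≤ h s₁ - h s₂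

def LocallyNondecreasingAt (h : ℝ → ℝ) (s₀ : ℝ) : Prop :=
  ∀ ε : ℝ, 0 < ε → ∃ δ : ℝ, 0 < δ ∧ ∀ s₁ s₂ : ℝ,
    |s₁ - s₀| < δ → |s₂ - s₀| < δ → s₁ < s₂ → h s₁ - h s₂ ≤ ε

theorem locallyMonotoneAt_iff {h : ℝ → ℝ} {s₀ : ℝ} :
    LocallyMonotoneAt h s₀ ↔ LocallyNonincreasingAt h s₀ ∨ LocallyNondecreasingAt h s₀ :=
  Iff.rfl

theorem UpperSemicontinuousAt.le_of_frequently_le {α β : Type*} [TopologicalSpace α]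
    [LinearOrder β] {f : α → β} {x : α} {c : β} {l : Filter α}
    (hf : UpperSemicontinuousAt f x) (hl : l ≤ 𝓝 x) (h : ∃ᶠ y in l, c ≤ f y) : c ≤ f x := by
  by_contra! hlt
  obtain ⟨y, hcy, hyc⟩ := (h.and_eventually (hl (hf c hlt))).exists
  exact (hcy.trans_lt hyc).false

theorem UpperSemicontinuousAt.le_of_forall_eventually_le_add {α : Type*} [TopologicalSpace α]
    {f g : α → ℝ} {x : α} {c : ℝ} {l : Filter α} [l.NeBot]
    (hf : UpperSemicontinuousAt f x) (hl : l ≤ 𝓝 x)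
    (hfg : ∀ ε : ℝ, 0 < ε → ∀ᶠ s in l, f x + g x ≤ f s + g s + ε) (hg : ∀ᶠ s in l, g s = c) :
    g x ≤ c := by
  by_contra! hlt
  have hε : 0 < (g x - c) / 3 := by linarith
  obtain ⟨s, hS, hgs, hfs⟩ :=
    ((hfg _ hε).and (hg.and (hl (hf _ (lt_add_of_pos_right (f x) hε))))).exists
  linarith

section

variable {f : ℝ → ℝ} {x ε : ℝ}

theorem LocallyNonincreasingAt.eventually_nhdsLT (hf : LocallyNonincreasingAt f x)
    (hε : 0 < ε) : ∀ᶠ s in 𝓝[<] x, f x ≤ f s + ε := by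
  obtain ⟨δ, hδ, hmono⟩ := hf ε hε
  filter_upwards [Ioo_mem_nhdsLT (sub_lt_self x hδ)] with s hs
  have := hmono s x (by rw [abs_sub_lt_iff]; constructor <;> linarith [hs.1, hs.2])
    (by simpa using hδ) hs.2
  linarith

theorem LocallyNondecreasingAt.eventually_nhdsGT (hf : LocallyNondecreasingAt f x)
    (hε : 0 < ε) : ∀ᶠ s in 𝓝[>] x, f x ≤ f s + ε := by
  obtain ⟨δ, hδ, hmono⟩ := hf ε hε
  filter_upwards [Ioo_mem_nhdsGT (lt_add_of_pos_right x hδ)] with s hs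
  have := hmono x s (by simpa using hδ)
    (by rw [abs_sub_lt_iff]; constructor <;> linarith [hs.1, hs.2]) hs.1
  linarith

theorem LocallyNondecreasingAt.tendsto_nhdsGT (hmono : LocallyNondecreasingAt f x)
    (hf : UpperSemicontinuousAt f x) : Tendsto f (𝓝[>] x) (𝓝 (f x)) := by
  refine tendsto_order.2 ⟨fun c hc => ?_, fun c hc => nhdsWithin_le_nhds (hf c hc)⟩
  filter_upwards [hmono.eventually_nhdsGT (half_pos (sub_pos.2 hc))] with s hs
  linarith

theorem limsup_nhdsNE_eq_of_tendsto_nhdsGT (hf : UpperSemicontinuousAt f x)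
    (h : Tendsto f (𝓝[>] x) (𝓝 (f x))) :
    limsup (fun s => (f s : EReal)) (𝓝[≠] x) = f x := by
  have husc : UpperSemicontinuousAt (fun s => (f s : EReal)) x :=
    continuous_coe_real_ereal.continuousAt.comp_upperSemicontinuousAt hf
      EReal.coe_strictMono.monotone
  refine le_antisymm ((limsup_le_limsup_of_le nhdsWithin_le_nhds).trans husc.limsup_le) ?_
  calc (f x : EReal) = limsup (fun s => (f s : EReal)) (𝓝[>] x) :=
        ((continuous_coe_real_ereal.tendsto _).comp h).limsup_eq.symm
    _ ≤ limsup (fun s => (f s : EReal)) (𝓝[≠] x) :=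
        limsup_le_limsup_of_le (nhdsGT_le_nhdsNE x)

end

theorem LocallyNondecreasingAt.of_add_of_const_on_sides {f g : ℝ → ℝ} {x δ a b : ℝ}
    (hfg : LocallyNondecreasingAt (fun s => f s + g s) x) (hf : UpperSemicontinuousAt f x)
    (hδ : 0 < δ) (hleft : ∀ s ∈ Ioo (x - δ) x, g s = a)
    (hright : ∀ s ∈ Ico x (x + δ), g s = b) :
    LocallyNondecreasingAt f x := by
  intro ε hε
  obtain ⟨η, hη, hS⟩ := hfg (ε / 3) (by positivity)
  set r := min η δ
  have hr : 0 < r := lt_min hη hδ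
  refine ⟨r, hr, fun s₁ s₂ h₁ h₂ h₁₂ => ?_⟩
  have same_side : ∀ t₁ t₂, |t₁ - x| < r → |t₂ - x| < r → t₁ < t₂ → g t₁ = g t₂ →
      f t₁ - f t₂ ≤ ε / 3 := fun t₁ t₂ ht₁ ht₂ ht₁₂ hg => by
    have := hS t₁ t₂ (ht₁.trans_le (min_le_left _ _)) (ht₂.trans_le (min_le_left _ _)) ht₁₂
    linarith
  have left : ∀ t, |t - x| < r → t < x → g t = a := fun t ht htx =>
    hleft t ⟨by linarith [(abs_sub_lt_iff.1 ht).2, min_le_right η δ], htx⟩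
  have right : ∀ t, |t - x| < r → x ≤ t → g t = b := fun t ht hxt =>
    hright t ⟨hxt, by linarith [(abs_sub_lt_iff.1 ht).1, min_le_right η δ]⟩
  rcases lt_or_ge s₂ x with hs₂ | hs₂
  · exact same_side s₁ s₂ h₁ h₂ h₁₂ ((left s₁ h₁ (h₁₂.trans hs₂)).trans (left s₂ h₂ hs₂).symm)
      |>.trans (by linarith)
  rcases le_or_gt x s₁ with hs₁ | hs₁
  · exact same_side s₁ s₂ h₁ h₂ h₁₂
      ((right s₁ h₁ hs₁).trans (right s₂ h₂ (hs₁.trans h₁₂.le)).symm) |>.trans (by linarith)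
  have hnear : ∀ᶠ t in 𝓝[<] x, t ∈ Ioo s₁ x ∧ f t < f x + ε / 3 :=
    Filter.Eventually.and (Ioo_mem_nhdsLT hs₁)
      (nhdsWithin_le_nhds (hf _ (lt_add_of_pos_right (f x) (by positivity))))
  obtain ⟨t, ⟨hs₁t, htx⟩, hft⟩ := hnear.exists
  have ht : |t - x| < r := by
    rw [abs_sub_lt_iff] at h₁ ⊢; constructor <;> linarith [h₁.1, h₁.2]
  have h_left : f s₁ - f t ≤ ε / 3 :=
    same_side s₁ t h₁ ht hs₁t ((left s₁ h₁ hs₁).trans (left t ht htx).symm)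
  have h_right : f x - f s₂ ≤ ε / 3 := by
    rcases hs₂.eq_or_lt with rfl | hxs₂
    · linarith
    · exact same_side x s₂ (by simpa using hr) h₂ hxs₂
        ((right x (by simpa using hr) le_rfl).trans (right s₂ h₂ hs₂).symm)
  linarith

theorem jump_point_structure_general
    (R₁ R₂ : ℝ → ℝ) (s₀ a b δ₁ : ℝ) (hδ₁ : 0 < δ₁) (hab : a < b)
    (hR₁usc : UpperSemicontinuousAt R₁ s₀)
    (hR₂usc : UpperSemicontinuousAt R₂ s₀)
    (hsum : LocallyMonotoneAt (fun s => R₁ s + R₂ s) s₀)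
    (hleft : ∀ s ∈ Set.Ioo (s₀ - δ₁) s₀, R₂ s = a)
    (hright : ∀ s ∈ Set.Ioo s₀ (s₀ + δ₁), R₂ s = b) :
    R₂ s₀ = b ∧
    Filter.limsup (fun s => ((R₁ s : ℝ) : EReal)) (𝓝[≠] s₀) = (R₁ s₀ : EReal) ∧
    (∀ ε : ℝ, 0 < ε → ∃ δ : ℝ, 0 < δ ∧ ∀ s₁ s₂ : ℝ,
      |s₁ - s₀| < δ → |s₂ - s₀| < δ → s₁ < s₂ → R₁ s₁ - R₁ s₂ ≤ ε) := by
  have hR₂_left : ∀ᶠ s in 𝓝[<] s₀, R₂ s = a :=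
    mem_of_superset (Ioo_mem_nhdsLT (sub_lt_self s₀ hδ₁)) hleft
  have hR₂_right : ∀ᶠ s in 𝓝[>] s₀, R₂ s = b :=
    mem_of_superset (Ioo_mem_nhdsGT (lt_add_of_pos_right s₀ hδ₁)) hright
  have hb_le : b ≤ R₂ s₀ :=
    hR₂usc.le_of_frequently_le nhdsWithin_le_nhds (hR₂_right.mono fun _ h => h.ge).frequently
  have hsum_nondec : LocallyNondecreasingAt (fun s => R₁ s + R₂ s) s₀ := by
    refine (locallyMonotoneAt_iff.1 hsum).resolve_left fun hnoninc => ?_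
    have := hR₁usc.le_of_forall_eventually_le_add nhdsWithin_le_nhds
      (fun ε hε => hnoninc.eventually_nhdsLT hε) hR₂_left
    linarith
  have hR₂_le : R₂ s₀ ≤ b := hR₁usc.le_of_forall_eventually_le_add nhdsWithin_le_nhds
    (fun ε hε => hsum_nondec.eventually_nhdsGT hε) hR₂_right
  have hR₂_eq : R₂ s₀ = b := le_antisymm hR₂_le hb_le
  have hR₁_nondec : LocallyNondecreasingAt R₁ s₀ :=
    hsum_nondec.of_add_of_const_on_sides hR₁usc hδ₁ hleft
      fun s hs => hs.1.eq_or_lt.elim (fun h => h ▸ hR₂_eq) fun h => hright s ⟨h, hs.2⟩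
  exact ⟨hR₂_eq, limsup_nhdsNE_eq_of_tendsto_nhdsGT hR₁usc (hR₁_nondec.tendsto_nhdsGT hR₁usc),
    hR₁_nondec⟩

/-- If `R₁, R₂` are u.s.c. and locally monotone at `s₀`, `R₁ + R₂` is locally
monotone at `s₀`, and `R₂` is piecewise constant near `s₀` with an upward jump
`R₂(s₀+) = b > a = R₂(s₀−)`, then `R₂(s₀) = b`, `limsup_{s'→s₀} R₁(s') = R₁(s₀)`,
and `R₁` is locally nondecreasing at `s₀`. -/
theorem jump_point_structure
    (R₁ R₂ : ℝ → ℝ) (s₀ a b δ₁ : ℝ) (hδ₁ : 0 < δ₁) (hab : a < b)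
    (hR₁usc : UpperSemicontinuousAt R₁ s₀)
    (hR₂usc : UpperSemicontinuousAt R₂ s₀)
    (hR₁mono : LocallyMonotoneAt R₁ s₀)
    (hsum : LocallyMonotoneAt (fun s => R₁ s + R₂ s) s₀)
    (hleft : ∀ s ∈ Set.Ioo (s₀ - δ₁) s₀, R₂ s = a)
    (hright : ∀ s ∈ Set.Ioo s₀ (s₀ + δ₁), R₂ s = b) :
    R₂ s₀ = b ∧
    Filter.limsup (fun s => ((R₁ s : ℝ) : EReal)) (𝓝[≠] s₀) = (R₁ s₀ : EReal) ∧
    (∀ ε : ℝ, 0 < ε → ∃ δ : ℝ, 0 < δ ∧ ∀ s₁ s₂ : ℝ,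
      |s₁ - s₀| < δ → |s₂ - s₀| < δ → s₁ < s₂ → R₁ s₁ - R₁ s₂ ≤ ε) :=
  jump_point_structure_general R₁ R₂ s₀ a b δ₁ hδ₁ hab hR₁usc hR₂usc hsum hleft hright
end
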